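/- arXiv:1707.01061 — 4 statements merged into one kernel-verified Lean document; each statement's English description precedes it below -/
import Mathlib

section
/- Let {f_N : 1 ≤ N ≤ 2^m − 1} be a signed tree system on Q = [0,1]^n with the support and sign conditions holding everywhere, and let σ be the unique permutation of {1, …, 2^m − 1} with t_{σ(1)} < t_{σ(2)} < … < t_{σ(2^m−1)}. Then for every x ∈ ℝⁿ there exists an integer l with 0 ≤ l ≤ 2^m − 1 such that f_{σ(h)}(x) ≤ 0 for all 1 ≤ h ≤ l and f_{σ(h)}(x) ≥ 0 for all l < h ≤ 2^m − 1. -/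
/-!
Write `a N = f_N(x)` for the fixed point `x`. The support conditions say that a nonzero label
forces its parent to be nonzero, with sign `+` for a left child and `-` for a right child. Two
siblings can therefore never both be nonzero, so the vertices with nonzero label form a single
path from the root. Along that path, a negative vertex `N` continues to the right and a positive
one to the left; since the descendants of a vertex have their points `t` in its dyadic interval,
`a N < 0 < a M` forces `t_N < t_M`. Listing the vertices by increasing `t`, all negative values
thus come before all positive ones.
-/

open MeasureTheory Function

/-- The unit cube `Q = [0,1]^n` in `ℝⁿ`. -/
def unitCube (n : ℕ) : Set (EuclideanSpace ℝ (Fin n)) :=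
  {x | ∀ i, x i ∈ Set.Icc (0:ℝ) 1}

/-- `t_N = (2j - 1)/2^(k+1)` where `N = 2^k + j - 1`, `1 ≤ j ≤ 2^k`. -/
noncomputable def treePointN (N : ℕ) : ℝ :=
  (2 * ((N : ℝ) - 2 ^ Nat.log 2 N + 1) - 1) / 2 ^ (Nat.log 2 N + 1)

lemma treePointN_add_one (N : ℕ) :
    treePointN N + 1 = (2 * N + 1 : ℝ) / 2 ^ (Nat.log 2 N + 1) := by
  unfold treePointN
  field_simp
  ring

lemma Nat.log_two_eq_log_div_two_add_one {K : ℕ} (hK : 2 ≤ K) :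
    Nat.log 2 K = Nat.log 2 (K / 2) + 1 := by
  have := Nat.log_pos one_lt_two hK
  rw [Nat.log_div_base]
  omega

/-- `treePointN C + 1` is the midpoint of the dyadic interval `[C, C + 1] / 2 ^ log C`, which
contains the points of all descendants `M` of `C`. -/
lemma treePointN_add_one_mem_Ioo {C M i : ℕ} (hC : 1 ≤ C) (h : M / 2 ^ i = C) :
    treePointN M + 1 ∈ Set.Ioo ((C : ℝ) / 2 ^ Nat.log 2 C) ((C + 1) / 2 ^ Nat.log 2 C) := by
  have hlo : C * 2 ^ i ≤ M := (Nat.le_div_iff_mul_le (by positivity)).1 h.ge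
  have hhi : M < (C + 1) * 2 ^ i := (Nat.div_lt_iff_lt_mul (by positivity)).1 (by omega)
  have hlog : Nat.log 2 M = Nat.log 2 C + i := by
    have := Nat.le_log_of_pow_le one_lt_two (le_trans (Nat.le_mul_of_pos_left _ hC) hlo)
    rw [← h, Nat.log_div_base_pow]
    omega
  have hloR : (C : ℝ) * 2 ^ i ≤ M := by exact_mod_cast hlo
  have hhiR : (M : ℝ) + 1 ≤ (C + 1) * 2 ^ i := by exact_mod_cast hhi
  have hk : (0 : ℝ) < 2 ^ Nat.log 2 C := by positivity
  rw [treePointN_add_one, hlog, pow_succ, pow_add]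
  constructor
  · rw [div_lt_div_iff₀ hk (by positivity)]
    nlinarith [mul_le_mul_of_nonneg_right hloR hk.le]
  · rw [div_lt_div_iff₀ (by positivity) hk]
    nlinarith [mul_le_mul_of_nonneg_right hhiR hk.le]

lemma treePointN_lt_of_div_pow_eq_two_mul {N M i : ℕ} (hN : 1 ≤ N) (h : M / 2 ^ i = 2 * N) :
    treePointN M < treePointN N := by
  have hM := (treePointN_add_one_mem_Ioo (by omega) h).2
  rw [Nat.log_two_eq_log_div_two_add_one (by omega), Nat.mul_div_cancel_left N two_pos] at hM
  rw [← add_lt_add_iff_right 1, treePointN_add_one N]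
  push_cast at hM
  exact hM

lemma treePointN_lt_of_div_pow_eq_two_mul_add_one {N M i : ℕ} (hN : 1 ≤ N)
    (h : M / 2 ^ i = 2 * N + 1) : treePointN N < treePointN M := by
  have hM := (treePointN_add_one_mem_Ioo (by omega) h).1
  rw [Nat.log_two_eq_log_div_two_add_one (by omega), (by omega : (2 * N + 1) / 2 = N)] at hM
  rw [← add_lt_add_iff_right 1, treePointN_add_one N]
  push_cast at hM
  exact hM

def IsSignedTreeLabelling {α : Type*} [Zero α] [LT α] (a : ℕ → α) : Prop :=
  ∀ N, 1 ≤ N → (a (2 * N) ≠ 0 → 0 < a N) ∧ (a (2 * N + 1) ≠ 0 → a N < 0)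

lemma Nat.two_mul_add_one_lt_two_pow {N m : ℕ} (hN : 1 ≤ N) (h : 2 * N < 2 ^ m) :
    2 * N + 1 < 2 ^ m := by
  obtain _ | m := m
  · simp at h
    omega
  · rw [pow_succ] at h ⊢
    omega

/-- A left child lies in the tree of height `m` exactly when its right sibling does. -/
lemma isSignedTreeLabelling_ite {α : Type*} [Zero α] [Preorder α] {a : ℕ → α} {m : ℕ}
    (ha : ∀ N, 1 ≤ N → 2 * N + 1 < 2 ^ m →
      (a (2 * N) ≠ 0 → 0 < a N) ∧ (a (2 * N + 1) ≠ 0 → a N < 0)) :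
    IsSignedTreeLabelling fun K => if K < 2 ^ m then a K else 0 := by
  intro N hN
  by_cases hlt : 2 * N < 2 ^ m
  · have hlt' := Nat.two_mul_add_one_lt_two_pow hN hlt
    simpa only [hlt, hlt', if_true, (by omega : N < 2 ^ m)] using ha N hN hlt'
  · have hlt' : ¬2 * N + 1 < 2 ^ m := by omega
    simp only [hlt, hlt', if_false, ne_eq, not_true_eq_false, false_imp_iff, and_self]

namespace IsSignedTreeLabelling

variable {α : Type*} [Zero α] [Preorder α] {a : ℕ → α}

lemma ne_zero_div_two (ha : IsSignedTreeLabelling a) {K : ℕ} (hK : 2 ≤ K) (h : a K ≠ 0) :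
    a (K / 2) ≠ 0 := by
  rcases Nat.even_or_odd' K with ⟨P, rfl | rfl⟩
  · rw [Nat.mul_div_cancel_left P two_pos]
    exact ((ha P (by omega)).1 h).ne'
  · rw [(by omega : (2 * P + 1) / 2 = P)]
    exact ((ha P (by omega)).2 h).ne

lemma ne_zero_div_two_pow (ha : IsSignedTreeLabelling a) {K : ℕ} (h : a K ≠ 0) :
    ∀ {i : ℕ}, 1 ≤ K / 2 ^ i → a (K / 2 ^ i) ≠ 0
  | 0, _ => by simpa using h
  | i + 1, hi => by
    rw [pow_succ, ← Nat.div_div_eq_div_mul] at hi ⊢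
    exact ha.ne_zero_div_two (by omega) (ha.ne_zero_div_two_pow h (by omega))

lemma eq_of_log_eq (ha : IsSignedTreeLabelling a) {N M : ℕ} (hN : 1 ≤ N) (hM : 1 ≤ M)
    (hlog : Nat.log 2 N = Nat.log 2 M) (hN0 : a N ≠ 0) (hM0 : a M ≠ 0) : N = M := by
  induction hk : Nat.log 2 N generalizing N M with
  | zero =>
    have hN2 := Nat.log_eq_zero_iff.1 hk
    have hM2 := Nat.log_eq_zero_iff.1 (hlog ▸ hk)
    omega
  | succ k ih =>
    have two_le {K : ℕ} (hK : Nat.log 2 K = k + 1) : 2 ≤ K := by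
      by_contra! h
      rw [Nat.log_of_lt h] at hK
      omega
    have hN2 := two_le hk
    have hM2 := two_le (hlog ▸ hk)
    have hP : N / 2 = M / 2 :=
      ih (by omega) (by omega) (by simp only [Nat.log_div_base, hlog])
        (ha.ne_zero_div_two hN2 hN0) (ha.ne_zero_div_two hM2 hM0)
        (by rw [Nat.log_div_base, hk]; rfl)
    by_contra hNM
    -- `N` and `M` are siblings, so their common parent would be both positive and negative.
    obtain ⟨hpos, hneg⟩ := ha (N / 2) (by omega)
    rcases (by omega : N = 2 * (N / 2) ∧ M = 2 * (N / 2) + 1 ∨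
        N = 2 * (N / 2) + 1 ∧ M = 2 * (N / 2)) with ⟨hN', hM'⟩ | ⟨hN', hM'⟩
    · exact lt_asymm (hpos (hN' ▸ hN0)) (hneg (hM' ▸ hM0))
    · exact lt_asymm (hpos (hM' ▸ hM0)) (hneg (hN' ▸ hN0))

lemma div_two_pow_eq_of_log_le (ha : IsSignedTreeLabelling a) {N M : ℕ} (hN : 1 ≤ N)
    (hM : 1 ≤ M) (hlog : Nat.log 2 N ≤ Nat.log 2 M) (hN0 : a N ≠ 0) (hM0 : a M ≠ 0) :
    M / 2 ^ (Nat.log 2 M - Nat.log 2 N) = N := by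
  have hK : 1 ≤ M / 2 ^ (Nat.log 2 M - Nat.log 2 N) :=
    (Nat.le_div_iff_mul_le (by positivity)).2 <| by
      rw [one_mul]
      exact (Nat.pow_le_pow_right two_pos (Nat.sub_le _ _)).trans
        (Nat.pow_log_le_self 2 (by omega))
  refine (ha.eq_of_log_eq hN hK ?_ hN0 (ha.ne_zero_div_two_pow hM0 hK)).symm
  rw [Nat.log_div_base_pow]
  omega

lemma sign_side_of_div_two_pow_succ_eq (ha : IsSignedTreeLabelling a) {A K i : ℕ}
    (hA : 1 ≤ A) (hK : K / 2 ^ (i + 1) = A) (h : a K ≠ 0) :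
    (0 < a A ∧ treePointN K < treePointN A) ∨ (a A < 0 ∧ treePointN A < treePointN K) := by
  rw [pow_succ, ← Nat.div_div_eq_div_mul] at hK
  have hC := ha.ne_zero_div_two_pow h (i := i) (by omega)
  rcases (by omega : K / 2 ^ i = 2 * A ∨ K / 2 ^ i = 2 * A + 1) with hL | hR
  · exact Or.inl ⟨(ha A hA).1 (hL ▸ hC), treePointN_lt_of_div_pow_eq_two_mul hA hL⟩
  · exact Or.inr ⟨(ha A hA).2 (hR ▸ hC), treePointN_lt_of_div_pow_eq_two_mul_add_one hA hR⟩

lemma treePointN_lt (ha : IsSignedTreeLabelling a) {N M : ℕ} (hN : 1 ≤ N) (hM : 1 ≤ M)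
    (hNneg : a N < 0) (hMpos : 0 < a M) : treePointN N < treePointN M := by
  rcases le_total (Nat.log 2 N) (Nat.log 2 M) with hle | hle
  · have hdiv := ha.div_two_pow_eq_of_log_le hN hM hle hNneg.ne hMpos.ne'
    rcases hd : Nat.log 2 M - Nat.log 2 N with _ | i
    · rw [hd, pow_zero, Nat.div_one] at hdiv
      exact absurd (hdiv ▸ hMpos) (lt_asymm hNneg)
    · rw [hd] at hdiv
      rcases ha.sign_side_of_div_two_pow_succ_eq hN hdiv hMpos.ne' with ⟨hpos, -⟩ | ⟨-, hlt⟩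
      · exact absurd hpos (lt_asymm hNneg)
      · exact hlt
  · have hdiv := ha.div_two_pow_eq_of_log_le hM hN hle hMpos.ne' hNneg.ne
    rcases hd : Nat.log 2 N - Nat.log 2 M with _ | i
    · rw [hd, pow_zero, Nat.div_one] at hdiv
      exact absurd (hdiv ▸ hNneg) (lt_asymm hMpos)
    · rw [hd] at hdiv
      rcases ha.sign_side_of_div_two_pow_succ_eq hM hdiv hNneg.ne with ⟨-, hlt⟩ | ⟨hneg, -⟩
      · exact hlt
      · exact absurd hneg (lt_asymm hMpos)

end IsSignedTreeLabelling

lemma exists_sign_split {α : Type*} [Zero α] [LinearOrder α] {g : ℕ → α} {L : ℕ}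
    (hg : ∀ i ∈ Set.Icc 1 L, ∀ j ∈ Set.Icc 1 L, g i < 0 → 0 < g j → i < j) :
    ∃ l ≤ L, (∀ h, 1 ≤ h → h ≤ l → g h ≤ 0) ∧ (∀ h, l < h → h ≤ L → 0 ≤ g h) := by
  classical
  have hP : ∃ l, ∀ h, l < h → h ≤ L → 0 ≤ g h := ⟨L, fun h h1 h2 => by omega⟩
  refine ⟨Nat.find hP, Nat.find_min' hP fun h h1 h2 => by omega, ?_, Nat.find_spec hP⟩
  intro h h1 hl
  by_contra! hpos
  -- Minimality of `l` produces a negative value at `l` itself, which must come after `h ≤ l`.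
  obtain ⟨k, hk, hkL, hneg⟩ : ∃ k, Nat.find hP - 1 < k ∧ k ≤ L ∧ g k < 0 := by
    simpa using Nat.find_min hP (by omega : Nat.find hP - 1 < Nat.find hP)
  have hkl : k ≤ Nat.find hP := by
    by_contra! hlt
    exact (Nat.find_spec hP k hlt hkL).not_gt hneg
  have := hg k ⟨by omega, hkL⟩ h ⟨h1, by omega⟩ hneg hpos
  omega

theorem signedTreeSystem_sign_split_general (n m : ℕ)
    (f : ℕ → EuclideanSpace ℝ (Fin n) → ℝ)
    (hsigned : ∀ N, 1 ≤ N → 2 * N + 1 ≤ 2 ^ m - 1 →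
      support (f (2 * N)) ⊆ {y | y ∈ unitCube n ∧ 0 < f N y} ∧
      support (f (2 * N + 1)) ⊆ {y | y ∈ unitCube n ∧ f N y < 0})
    (σ : ℕ → ℕ)
    (hσ : Set.BijOn σ (Set.Icc 1 (2 ^ m - 1)) (Set.Icc 1 (2 ^ m - 1)))
    (hσmono : StrictMonoOn (fun N => treePointN (σ N)) (Set.Icc 1 (2 ^ m - 1)))
    (x : EuclideanSpace ℝ (Fin n)) :
    ∃ l : ℕ, l ≤ 2 ^ m - 1 ∧
      (∀ h, 1 ≤ h → h ≤ l → f (σ h) x ≤ 0) ∧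
      (∀ h, l < h → h ≤ 2 ^ m - 1 → 0 ≤ f (σ h) x) := by
  have ha : IsSignedTreeLabelling fun K => if K < 2 ^ m then f K x else 0 :=
    isSignedTreeLabelling_ite fun N hN hlt =>
      ⟨fun h => ((hsigned N hN (by omega)).1 h).2, fun h => ((hsigned N hN (by omega)).2 h).2⟩
  refine exists_sign_split fun i hi j hj hneg hpos => ?_
  obtain ⟨hσi1, hσiL⟩ := hσ.mapsTo hi
  obtain ⟨hσj1, hσjL⟩ := hσ.mapsTo hj
  rw [← hσmono.lt_iff_lt hi hj]
  refine ha.treePointN_lt hσi1 hσj1 ?_ ?_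
  · simpa only [(by omega : σ i < 2 ^ m), if_true] using hneg
  · simpa only [(by omega : σ j < 2 ^ m), if_true] using hpos

/-- Let `{f_N : 1 ≤ N ≤ 2^m - 1}` be a signed tree system on `Q = [0,1]^n` (indexed so that
the vertex `N = 2^k + j - 1` has left child `2N` and right child `2N + 1`), with the support
and sign conditions holding everywhere, and let `σ` be the (unique) permutation of
`{1, …, 2^m - 1}` for which `t_{σ(1)} < t_{σ(2)} < … < t_{σ(2^m - 1)}`. Then for every
`x ∈ ℝⁿ` there is an `l` with `0 ≤ l ≤ 2^m - 1` such that `f_{σ(h)}(x) ≤ 0` for all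
`1 ≤ h ≤ l` and `f_{σ(h)}(x) ≥ 0` for all `l < h ≤ 2^m - 1`. -/
theorem signedTreeSystem_sign_split (n m : ℕ) (hm : 1 ≤ m)
    (f : ℕ → EuclideanSpace ℝ (Fin n) → ℝ)
    (hsupp : ∀ N, 1 ≤ N → N ≤ 2 ^ m - 1 → support (f N) ⊆ unitCube n)
    (hsigned : ∀ N, 1 ≤ N → 2 * N + 1 ≤ 2 ^ m - 1 →
      support (f (2 * N)) ⊆ {y | y ∈ unitCube n ∧ 0 < f N y} ∧
      support (f (2 * N + 1)) ⊆ {y | y ∈ unitCube n ∧ f N y < 0})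
    (σ : ℕ → ℕ)
    (hσ : Set.BijOn σ (Set.Icc 1 (2 ^ m - 1)) (Set.Icc 1 (2 ^ m - 1)))
    (hσmono : StrictMonoOn (fun N => treePointN (σ N)) (Set.Icc 1 (2 ^ m - 1)))
    (x : EuclideanSpace ℝ (Fin n)) :
    ∃ l : ℕ, l ≤ 2 ^ m - 1 ∧
      (∀ h, 1 ≤ h → h ≤ l → f (σ h) x ≤ 0) ∧
      (∀ h, l < h → h ≤ 2 ^ m - 1 → 0 ≤ f (σ h) x) :=
  signedTreeSystem_sign_split_general n m f hsigned σ hσ hσmono x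
end

section
/- Let σ be the unique permutation of {1, …, 2^m − 1} with t_{σ(1)} < t_{σ(2)} < … < t_{σ(2^m−1)}. Then for every signed tree system f_1, …, f_{2^m−1} on Q = [0,1]^n (with the support and sign conditions holding everywhere) and for every x ∈ ℝⁿ, one has max_{1 ≤ l < 2^m} |Σ_{N=1}^{l} f_{σ(N)}(x)| ≥ (1/3) Σ_{N=1}^{2^m−1} |f_N(x)|. -/
open MeasureTheory Function

/-!
At a point `x`, the sign conditions force every nonzero value `f_N(x)` onto one root-to-leaf path,
which turns left at a vertex where `f_N(x) > 0` and right where `f_N(x) ≤ 0`. Since `t` separates a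
left subtree, its root and the right subtree in this order, listing the values in increasing order
of `t` puts the nonpositive path values before the leaf and the positive ones after it. With block
sums `A ≤ 0`, `c` (the leaf) and `B ≥ 0`, the total variation `-A + |c| + B` is at most three times
the largest of the partial sums `|A|`, `|A + c|`, `|A + c + B|`.
-/

open Finset

noncomputable def signPath (g : ℕ → ℝ) : ℕ → ℕ
  | 0 => 1
  | i + 1 => if 0 < g (signPath g i) then 2 * signPath g i else 2 * signPath g i + 1

/-- The sign conditions of a signed tree system of height `m` at one point `x`, with `g N = f_N(x)`
and the children of vertex `N` numbered `2N` and `2N + 1`. -/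
def IsSignedTree (m : ℕ) (g : ℕ → ℝ) : Prop :=
  ∀ N, 1 ≤ N → 2 * N + 1 < 2 ^ m → (g (2 * N) ≠ 0 → 0 < g N) ∧ (g (2 * N + 1) ≠ 0 → g N < 0)

section signPath

variable {g : ℕ → ℝ}

@[simp] lemma signPath_zero : signPath g 0 = 1 := rfl

lemma signPath_succ (i : ℕ) :
    signPath g (i + 1) = if 0 < g (signPath g i) then 2 * signPath g i else 2 * signPath g i + 1 :=
  rfl

lemma signPath_add_mem_Ico (i d : ℕ) :
    signPath g (i + d) ∈ Set.Ico (signPath g i * 2 ^ d) ((signPath g i + 1) * 2 ^ d) := by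
  induction d with
  | zero => simp
  | succ d ih =>
    rw [← add_assoc, signPath_succ, pow_succ]
    split_ifs <;> constructor <;> nlinarith [ih.1, ih.2]

lemma signPath_mem_Ico (i : ℕ) : signPath g i ∈ Set.Ico (2 ^ i) (2 ^ (i + 1)) := by
  have h := signPath_add_mem_Ico (g := g) 0 i
  rw [zero_add] at h
  exact ⟨by simpa using h.1, by simpa [pow_succ, mul_comm] using h.2⟩

lemma treePointN_of_mem_Ico {k N : ℕ} (hN : N ∈ Set.Ico (2 ^ k) (2 ^ (k + 1))) :
    treePointN N = (2 * ((N : ℝ) - 2 ^ k) + 1) / 2 ^ (k + 1) := by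
  rw [treePointN, Nat.log_eq_of_pow_le_of_lt_pow hN.1 hN.2]
  ring

lemma treePointN_signPath (i : ℕ) :
    treePointN (signPath g i) = (2 * ((signPath g i : ℝ) - 2 ^ i) + 1) / 2 ^ (i + 1) :=
  treePointN_of_mem_Ico (signPath_mem_Ico i)

lemma treePointN_signPath_lt_of_pos {i j : ℕ} (hij : i < j) (hg : 0 < g (signPath g i)) :
    treePointN (signPath g j) < treePointN (signPath g i) := by
  obtain ⟨d, rfl⟩ : ∃ d, j = i + 1 + d := ⟨j - (i + 1), by omega⟩
  have hdesc := (signPath_add_mem_Ico (g := g) (i + 1) d).2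
  rw [signPath_succ, if_pos hg] at hdesc
  have hdesc' : (signPath g (i + 1 + d) : ℝ) + 1 ≤ (2 * signPath g i + 1) * 2 ^ d := by
    exact_mod_cast hdesc
  rw [treePointN_signPath, treePointN_signPath, div_lt_div_iff₀ (by positivity) (by positivity)]
  have hP : (0 : ℝ) < 2 ^ i := by positivity
  rw [show (2 : ℝ) ^ (i + 1 + d) = 2 ^ i * 2 ^ d * 2 by ring,
    show (2 : ℝ) ^ (i + 1 + d + 1) = 2 ^ i * 2 ^ d * 4 by ring, pow_succ]
  nlinarith [mul_le_mul_of_nonneg_left hdesc' hP.le]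

lemma lt_treePointN_signPath_of_not_pos {i j : ℕ} (hij : i < j) (hg : ¬0 < g (signPath g i)) :
    treePointN (signPath g i) < treePointN (signPath g j) := by
  obtain ⟨d, rfl⟩ : ∃ d, j = i + 1 + d := ⟨j - (i + 1), by omega⟩
  have hdesc := (signPath_add_mem_Ico (g := g) (i + 1) d).1
  rw [signPath_succ, if_neg hg] at hdesc
  have hdesc' : (2 * signPath g i + 1) * 2 ^ d ≤ (signPath g (i + 1 + d) : ℝ) := by
    exact_mod_cast hdesc
  rw [treePointN_signPath, treePointN_signPath, div_lt_div_iff₀ (by positivity) (by positivity)]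
  have hP : (0 : ℝ) < 2 ^ i := by positivity
  rw [show (2 : ℝ) ^ (i + 1 + d) = 2 ^ i * 2 ^ d * 2 by ring,
    show (2 : ℝ) ^ (i + 1 + d + 1) = 2 ^ i * 2 ^ d * 4 by ring, pow_succ]
  nlinarith [mul_le_mul_of_nonneg_left hdesc' hP.le]

lemma IsSignedTree.eq_signPath {m : ℕ} (hg : IsSignedTree m g) {d N : ℕ}
    (hN : N ∈ Set.Ico (2 ^ d) (2 ^ (d + 1))) (hNm : N < 2 ^ m) (hgN : g N ≠ 0) :
    N = signPath g d := by
  induction d generalizing N with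
  | zero =>
    simp only [zero_add, pow_zero, pow_one, Set.mem_Ico] at hN
    rw [signPath_zero]
    omega
  | succ d ih =>
    obtain ⟨hN1, hN2⟩ := hN
    have hd : 2 ^ (d + 2) ≤ 2 ^ m := Nat.pow_le_pow_right two_pos
      ((Nat.pow_lt_pow_iff_right (by norm_num)).mp (hN1.trans_lt hNm))
    simp only [pow_succ] at hN1 hN2 hd
    obtain ⟨P, hNP⟩ := Nat.even_or_odd' N
    have hP : P ∈ Set.Ico (2 ^ d) (2 ^ (d + 1)) := ⟨by omega, by rw [pow_succ]; omega⟩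
    have hsign := hg P (by omega) (by omega)
    have hgP : g P ≠ 0 := by
      rcases hNP with rfl | rfl
      exacts [(hsign.1 hgN).ne', (hsign.2 hgN).ne]
    rw [signPath_succ, ← ih hP (by omega) hgP]
    rcases hNP with rfl | rfl
    · rw [if_pos (hsign.1 hgN)]
    · rw [if_neg (hsign.2 hgN).not_gt]

lemma IsSignedTree.exists_eq_signPath {m N : ℕ} (hg : IsSignedTree m g)
    (hN : N ∈ Set.Icc 1 (2 ^ m - 1)) (hgN : g N ≠ 0) : ∃ i < m, N = signPath g i := by
  obtain ⟨hN1, hN2⟩ := hN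
  have hN0 : N ≠ 0 := by omega
  have hNm : N < 2 ^ m := by have := Nat.one_le_two_pow (n := m); omega
  have hlog : N ∈ Set.Ico (2 ^ Nat.log 2 N) (2 ^ (Nat.log 2 N + 1)) :=
    ⟨Nat.pow_log_le_self 2 hN0, Nat.lt_pow_succ_log_self one_lt_two N⟩
  exact ⟨Nat.log 2 N, Nat.log_lt_of_lt_pow hN0 hNm, hg.eq_signPath hlog hNm hgN⟩

lemma IsSignedTree.exists_sign_change {m : ℕ} (hg : IsSignedTree m g) (hm : 1 ≤ m) {σ : ℕ → ℕ}
    (hσ : Set.BijOn σ (Set.Icc 1 (2 ^ m - 1)) (Set.Icc 1 (2 ^ m - 1)))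
    (hσmono : StrictMonoOn (fun N => treePointN (σ N)) (Set.Icc 1 (2 ^ m - 1))) :
    ∃ q ∈ Icc 1 (2 ^ m - 1),
      (∀ N ∈ Ico 1 q, g (σ N) ≤ 0) ∧ (∀ N ∈ Ioc q (2 ^ m - 1), 0 ≤ g (σ N)) := by
  have hleaf : signPath g (m - 1) ∈ Set.Icc 1 (2 ^ m - 1) := by
    have h := signPath_mem_Ico (g := g) (m - 1)
    rw [Nat.sub_add_cancel hm] at h
    exact ⟨Nat.one_le_two_pow.trans h.1, Nat.le_sub_one_of_lt h.2⟩
  obtain ⟨q, hq, hσq⟩ := hσ.surjOn hleaf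
  refine ⟨q, by simpa using hq, fun N hN => ?_, fun N hN => ?_⟩
  all_goals
    simp only [mem_Ico, mem_Ioc] at hN
    have hNI : N ∈ Set.Icc 1 (2 ^ m - 1) := ⟨by omega, by have := hq.2; omega⟩
    by_contra hsign
    obtain ⟨i, hi, hσN⟩ :=
      hg.exists_eq_signPath (hσ.mapsTo hNI) (by contrapose! hsign; simp [hsign])
    have hi' : i < m - 1 := by
      have : i ≠ m - 1 := by
        rintro rfl
        exact (by omega : N ≠ q) (hσ.injOn hNI hq (hσN.trans hσq.symm))
      omega
    rw [hσN] at hsign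
  · have ht := hσmono hNI hq hN.2
    simp only [hσN, hσq] at ht
    exact (treePointN_signPath_lt_of_pos hi' (by linarith)).not_gt ht
  · have ht := hσmono hq hNI hN.1
    simp only [hσN, hσq] at ht
    exact (lt_treePointN_signPath_of_not_pos hi' (by linarith)).not_gt ht

end signPath

lemma sum_Icc_one_eq_add_add {M : Type*} [AddCommMonoid M] (F : ℕ → M) {q L : ℕ}
    (hq : q ∈ Icc 1 L) :
    ∑ N ∈ Icc 1 L, F N = ∑ N ∈ Icc 1 (q - 1), F N + F q + ∑ N ∈ Ioc q L, F N := by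
  obtain ⟨hq1, hqL⟩ := mem_Icc.mp hq
  have hIcc : ∀ x, Icc 1 x = Ioc 0 x := Icc_add_one_left_eq_Ioc 0
  have hq' : q - 1 + 1 = q := Nat.sub_add_cancel hq1
  rw [hIcc, hIcc, ← sum_Ioc_consecutive F (Nat.zero_le q) hqL]
  conv_lhs => rw [← hq']
  rw [sum_Ioc_succ_top (Nat.zero_le _), hq']

lemma neg_add_abs_add_le_three_mul {A c B X : ℝ} (h₁ : |A| ≤ X) (h₂ : |A + c| ≤ X)
    (h₃ : |A + c + B| ≤ X) : -A + |c| + B ≤ 3 * X := by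
  have := abs_le.mp h₁
  have := abs_le.mp h₂
  have := abs_le.mp h₃
  rcases abs_cases c with ⟨hc, -⟩ | ⟨hc, -⟩ <;> linarith

theorem exists_abs_partial_sum_ge {a : ℕ → ℝ} {L q : ℕ} (hq : q ∈ Icc 1 L)
    (hneg : ∀ N ∈ Ico 1 q, a N ≤ 0) (hpos : ∀ N ∈ Ioc q L, 0 ≤ a N) :
    ∃ l, 1 ≤ l ∧ l ≤ L ∧ 1 / 3 * ∑ N ∈ Icc 1 L, |a N| ≤ |∑ N ∈ Icc 1 l, a N| := by
  set S : ℕ → ℝ := fun l => ∑ N ∈ Icc 1 l, a N with hS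
  obtain ⟨hq1, hqL⟩ := mem_Icc.mp hq
  have hSq : S q = S (q - 1) + a q := by
    simpa using sum_Icc_one_eq_add_add a (mem_Icc.mpr ⟨hq1, le_rfl⟩)
  have hSL : S L = S (q - 1) + a q + ∑ N ∈ Ioc q L, a N := sum_Icc_one_eq_add_add a hq
  have hA : ∑ N ∈ Icc 1 (q - 1), |a N| = -S (q - 1) := by
    rw [hS, ← sum_neg_distrib]
    refine sum_congr rfl fun N hN => abs_of_nonpos (hneg N ?_)
    simp only [mem_Icc, mem_Ico] at hN ⊢
    omega
  have hB : ∑ N ∈ Ioc q L, |a N| = ∑ N ∈ Ioc q L, a N :=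
    sum_congr rfl fun N hN => abs_of_nonneg (hpos N hN)
  have htotal : ∑ N ∈ Icc 1 L, |a N| = -S (q - 1) + |a q| + ∑ N ∈ Ioc q L, a N := by
    rw [sum_Icc_one_eq_add_add _ hq, hA, hB]
  obtain ⟨l, hl, hmax⟩ := exists_max_image {q - 1, q, L} (fun l => |S l|) ⟨q, by simp⟩
  have hbound : ∑ N ∈ Icc 1 L, |a N| ≤ 3 * |S l| := htotal ▸ neg_add_abs_add_le_three_mul
    (hmax _ (by simp)) (hSq ▸ hmax _ (by simp)) (hSL ▸ hmax _ (by simp))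
  have hlL : l ≤ L := by simp only [mem_insert, mem_singleton] at hl; omega
  rcases Nat.eq_zero_or_pos l with rfl | hl0
  · refine ⟨L, hq1.trans hqL, le_rfl, ?_⟩
    have hS0 : S 0 = 0 := by simp [hS]
    rw [hS0, abs_zero, mul_zero] at hbound
    linarith [abs_nonneg (∑ N ∈ Icc 1 L, a N)]
  · exact ⟨l, hl0, hlL, by linarith⟩

theorem signedTreeSystem_partial_sum_lower_bound_general (n m : ℕ) (hm : 1 ≤ m)
    (σ : ℕ → ℕ)
    (hσ : Set.BijOn σ (Set.Icc 1 (2 ^ m - 1)) (Set.Icc 1 (2 ^ m - 1)))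
    (hσmono : StrictMonoOn (fun N => treePointN (σ N)) (Set.Icc 1 (2 ^ m - 1)))
    (f : ℕ → EuclideanSpace ℝ (Fin n) → ℝ)
    (hsigned : ∀ N, 1 ≤ N → 2 * N + 1 ≤ 2 ^ m - 1 →
      support (f (2 * N)) ⊆ {y | y ∈ unitCube n ∧ 0 < f N y} ∧
      support (f (2 * N + 1)) ⊆ {y | y ∈ unitCube n ∧ f N y < 0})
    (x : EuclideanSpace ℝ (Fin n)) :
    ∃ l : ℕ, 1 ≤ l ∧ l ≤ 2 ^ m - 1 ∧
      (1 / 3) * ∑ N ∈ Finset.Icc 1 (2 ^ m - 1), |f N x| ≤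
        |∑ N ∈ Finset.Icc 1 l, f (σ N) x| := by
  have hg : IsSignedTree m (fun N => f N x) := fun N hN hNm =>
    ⟨fun h => ((hsigned N hN (by omega)).1 h).2, fun h => ((hsigned N hN (by omega)).2 h).2⟩
  obtain ⟨q, hq, hneg, hpos⟩ := hg.exists_sign_change hm hσ hσmono
  have hreindex : ∑ N ∈ Icc 1 (2 ^ m - 1), |f N x| = ∑ N ∈ Icc 1 (2 ^ m - 1), |f (σ N) x| :=
    (sum_nbij σ (fun N hN => by simpa using hσ.mapsTo (by simpa using hN)) (by simpa using hσ.injOn)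
      (by simpa using hσ.surjOn) fun _ _ => rfl).symm
  rw [hreindex]
  exact exists_abs_partial_sum_ge hq hneg hpos

/-- (Karagulyan's lemma.) Let `σ` be the (unique) permutation of `{1, …, 2^m - 1}` with
`t_{σ(1)} < … < t_{σ(2^m - 1)}`. Then for every signed tree system `f_1, …, f_{2^m - 1}`
on `Q = [0,1]^n` (vertex `N` has left child `2N` and right child `2N + 1`; support and sign
conditions holding everywhere) and every `x ∈ ℝⁿ`,
`max_{1 ≤ l < 2^m} |Σ_{N=1}^{l} f_{σ(N)}(x)| ≥ (1/3) Σ_{N=1}^{2^m - 1} |f_N(x)|`,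
i.e. some partial sum along `σ` is at least one third of the sum of absolute values. -/
theorem signedTreeSystem_partial_sum_lower_bound (n m : ℕ) (hm : 1 ≤ m)
    (σ : ℕ → ℕ)
    (hσ : Set.BijOn σ (Set.Icc 1 (2 ^ m - 1)) (Set.Icc 1 (2 ^ m - 1)))
    (hσmono : StrictMonoOn (fun N => treePointN (σ N)) (Set.Icc 1 (2 ^ m - 1)))
    (f : ℕ → EuclideanSpace ℝ (Fin n) → ℝ)
    (hsupp : ∀ N, 1 ≤ N → N ≤ 2 ^ m - 1 → support (f N) ⊆ unitCube n)
    (hsigned : ∀ N, 1 ≤ N → 2 * N + 1 ≤ 2 ^ m - 1 →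
      support (f (2 * N)) ⊆ {y | y ∈ unitCube n ∧ 0 < f N y} ∧
      support (f (2 * N + 1)) ⊆ {y | y ∈ unitCube n ∧ f N y < 0})
    (x : EuclideanSpace ℝ (Fin n)) :
    ∃ l : ℕ, 1 ≤ l ∧ l ≤ 2 ^ m - 1 ∧
      (1 / 3) * ∑ N ∈ Finset.Icc 1 (2 ^ m - 1), |f N x| ≤
        |∑ N ∈ Finset.Icc 1 l, f (σ N) x| :=
  signedTreeSystem_partial_sum_lower_bound_general n m hm σ hσ hσmono f hsigned x
end

section
/- Let {E_N : 1 ≤ N ≤ 2^m − 1} be measurable subsets of Q = [0,1]^n, each of positive Lebesgue measure, whose indicators form a tree system. Let S be a nonempty finite set of vertices of the full binary tree of height m (identified with indices in {1, …, 2^m−1}). If all vertices of S lie on a common ray of the tree, then ⋂_{N ∈ S} E_N coincides, up to a set of Lebesgue measure zero, with E_{N'}, where N' is the element of S of maximal height, and in particular has positive measure. If the vertices of S do not all lie on a common ray, then ⋂_{N ∈ S} E_N has Lebesgue measure zero. -/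
/-!
Along a ray the sets decrease up to null sets, since each lies a.e. in its parent; so the
intersection over a chain is a.e. its deepest set. Two vertices not on a common ray lie below two
distinct siblings, whose sets are a.e. disjoint, so their sets meet in a null set.
-/

open MeasureTheory Function

/-- `a` lies on the ray from the root `1` down to `b` (`b` included), the children of `N` being
`2N` and `2N + 1`. -/
def IsAncestor (a b : ℕ) : Prop :=
  ∃ i, b / 2 ^ i = a

namespace IsAncestor

theorem refl (a : ℕ) : IsAncestor a a :=
  ⟨0, by simp⟩

theorem trans {a b c : ℕ} (hab : IsAncestor a b) (hbc : IsAncestor b c) : IsAncestor a c := by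
  obtain ⟨i, rfl⟩ := hab
  obtain ⟨j, rfl⟩ := hbc
  exact ⟨j + i, by rw [pow_add, Nat.div_div_eq_div_mul]⟩

theorem div_two (a : ℕ) : IsAncestor (a / 2) a :=
  ⟨1, by simp⟩

theorem one_left {b : ℕ} (hb : 1 ≤ b) : IsAncestor 1 b := by
  refine ⟨Nat.log 2 b, ?_⟩
  have hlog : Nat.log 2 (b / 2 ^ Nat.log 2 b) = 0 := by
    rw [Nat.log_div_base_pow, Nat.sub_self]
  have hlt : b / 2 ^ Nat.log 2 b < 2 := by
    simpa using (Nat.log_eq_zero_iff.mp hlog)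
  have hpos : 0 < b / 2 ^ Nat.log 2 b :=
    Nat.div_pos (Nat.pow_log_le_self 2 (by omega)) (by positivity)
  omega

theorem le {a b : ℕ} (h : IsAncestor a b) : a ≤ b := by
  obtain ⟨i, rfl⟩ := h
  exact Nat.div_le_self _ _

theorem eq_of_log_le {a b : ℕ} (h : IsAncestor a b) (ha : 1 ≤ a)
    (hlog : Nat.log 2 b ≤ Nat.log 2 a) : a = b := by
  obtain ⟨i, rfl⟩ := h
  rcases Nat.eq_zero_or_pos i with rfl | hi
  · simp
  rw [Nat.log_div_base_pow] at hlog
  have hb : b < 2 := by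
    by_contra! hb
    have := Nat.log_pos (b := 2) (by norm_num) hb
    omega
  have : b / 2 ^ i = 0 := Nat.div_eq_of_lt (by
    calc b < 2 := hb
      _ ≤ 2 ^ i := Nat.le_self_pow hi.ne' 2)
  omega

end IsAncestor

theorem exists_sibling_ancestors {a b : ℕ} (ha : 1 ≤ a) (hb : 1 ≤ b)
    (hab : ¬ IsAncestor a b) (hba : ¬ IsAncestor b a) :
    ∃ p q, IsAncestor p a ∧ IsAncestor q b ∧ p ≠ q ∧ p / 2 = q / 2 ∧ 1 ≤ p / 2 := by
  induction a using Nat.strong_induction_on with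
  | _ a ih =>
    have ha2 : 2 ≤ a := by
      by_contra! h
      obtain rfl : a = 1 := by omega
      exact hab (IsAncestor.one_left hb)
    by_cases hpar : IsAncestor (a / 2) b
    · obtain ⟨i, hi⟩ := hpar
      obtain ⟨i, rfl⟩ : ∃ j, i = j + 1 := by
        rcases i with _ | j
        · exact absurd ⟨1, by simpa using hi.symm⟩ hba
        · exact ⟨j, rfl⟩
      refine ⟨a, b / 2 ^ i, .refl a, ⟨i, rfl⟩, fun h => hab ⟨i, h.symm⟩, ?_, by omega⟩
      rw [← hi, pow_succ, Nat.div_div_eq_div_mul]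
    · obtain ⟨p, q, hpa, hqb, hpq, hsib, hp⟩ :=
        ih (a / 2) (by omega) (by omega) hpar fun h => hba (h.trans (.div_two a))
      exact ⟨p, q, hpa.trans (.div_two a), hqb, hpq, hsib, hp⟩

theorem two_mul_div_two_add_one_le_two_pow_sub_one {b m : ℕ} (hb : 1 ≤ b)
    (hbm : b ≤ 2 ^ m - 1) :
    2 * (b / 2) + 1 ≤ 2 ^ m - 1 := by
  rcases m with _ | m
  · omega
  · rw [pow_succ] at hbm ⊢
    omega

section TreeSystem

open Filter

variable {α : Type*} [MeasurableSpace α]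

/-- Vertex `(k, j)` of the full binary tree of height `m` is `N = 2 ^ k + j - 1`, so its children
`(k + 1, 2j - 1)` and `(k + 1, 2j)` are `2N` and `2N + 1`. -/
def IsTreeSystem (μ : Measure α) (m : ℕ) (E : ℕ → Set α) : Prop :=
  ∀ N, 1 ≤ N → 2 * N + 1 ≤ 2 ^ m - 1 →
    μ (E (2 * N) ∩ E (2 * N + 1)) = 0 ∧ μ ((E (2 * N) ∪ E (2 * N + 1)) \ E N) = 0

namespace IsTreeSystem

variable {μ : Measure α} {m : ℕ} {E : ℕ → Set α}

theorem ae_le_div_two (h : IsTreeSystem μ m E) {b : ℕ} (hb : 2 ≤ b) (hbm : b ≤ 2 ^ m - 1) :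
    E b ≤ᵐ[μ] E (b / 2) := by
  rw [ae_le_set]
  refine measure_mono_null (Set.sdiff_subset_sdiff_left ?_)
    (h (b / 2) (by omega) (two_mul_div_two_add_one_le_two_pow_sub_one (by omega) hbm)).2
  rcases Nat.even_or_odd' b with ⟨c, rfl | rfl⟩
  · simp
  · rw [show (2 * c + 1) / 2 = c by omega]
    exact Set.subset_union_right

theorem ae_le_of_isAncestor (h : IsTreeSystem μ m E) {a b : ℕ} (hab : IsAncestor a b)
    (ha : 1 ≤ a) (hbm : b ≤ 2 ^ m - 1) : E b ≤ᵐ[μ] E a := by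
  obtain ⟨i, rfl⟩ := hab
  induction i generalizing b with
  | zero =>
    simp only [pow_zero, Nat.div_one]
    exact EventuallyLE.rfl
  | succ i ih =>
    have hb : 2 ≤ b := by
      by_contra! hb
      rw [Nat.div_eq_of_lt (hb.trans_le (Nat.le_self_pow (by omega) 2))] at ha
      omega
    rw [pow_succ', ← Nat.div_div_eq_div_mul] at ha ⊢
    exact (h.ae_le_div_two hb hbm).trans (ih (by omega) ha)

theorem measure_inter_eq_zero_of_sibling (h : IsTreeSystem μ m E) {p q : ℕ} (hpq : p ≠ q)
    (hsib : p / 2 = q / 2) (hp : 1 ≤ p / 2) (hpm : p ≤ 2 ^ m - 1) :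
    μ (E p ∩ E q) = 0 := by
  have hc := h (p / 2) hp (two_mul_div_two_add_one_le_two_pow_sub_one (by omega) hpm)
  rcases (by omega : p = 2 * (p / 2) ∧ q = 2 * (p / 2) + 1 ∨
      p = 2 * (p / 2) + 1 ∧ q = 2 * (p / 2)) with ⟨hp, hq⟩ | ⟨hp, hq⟩
  · rw [hp, hq]
    exact hc.1
  · rw [hp, hq, Set.inter_comm]
    exact hc.1

theorem measure_inter_eq_zero_of_not_isAncestor (h : IsTreeSystem μ m E) {a b : ℕ}
    (ha : 1 ≤ a) (hb : 1 ≤ b) (ham : a ≤ 2 ^ m - 1) (hbm : b ≤ 2 ^ m - 1)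
    (hab : ¬ IsAncestor a b) (hba : ¬ IsAncestor b a) :
    μ (E a ∩ E b) = 0 := by
  obtain ⟨p, q, hpa, hqb, hpq, hsib, hp⟩ := exists_sibling_ancestors ha hb hab hba
  refine measure_mono_null_ae ?_ (h.measure_inter_eq_zero_of_sibling hpq hsib hp
    (hpa.le.trans ham))
  exact (h.ae_le_of_isAncestor hpa (by omega) ham).inter
    (h.ae_le_of_isAncestor hqb (by omega) hbm)

theorem biInter_ae_eq_of_isAncestor (h : IsTreeSystem μ m E) {S : Finset ℕ} {N' : ℕ}
    (hN' : N' ∈ S) (hN'm : N' ≤ 2 ^ m - 1) (hS : ∀ N ∈ S, 1 ≤ N ∧ IsAncestor N N') :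
    ⋂ N ∈ S, E N =ᵐ[μ] E N' := by
  refine ((Set.biInter_subset_of_mem hN').eventuallyLE).antisymm ?_
  have hall : ∀ᵐ x ∂μ, ∀ N ∈ S, x ∈ E N' → x ∈ E N :=
    (eventually_all_finset S).mpr fun N hN =>
      h.ae_le_of_isAncestor (hS N hN).2 (hS N hN).1 hN'm
  filter_upwards [hall] with x hx hxN'
  exact Set.mem_iInter₂.mpr fun N hN => hx N hN hxN'

end IsTreeSystem

end TreeSystem

theorem treeSystem_iInter_of_chain_general (n m : ℕ)
    (E : ℕ → Set (EuclideanSpace ℝ (Fin n)))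
    (hpos : ∀ N, 1 ≤ N → N ≤ 2 ^ m - 1 → 0 < volume (E N))
    (htree : ∀ N, 1 ≤ N → 2 * N + 1 ≤ 2 ^ m - 1 →
      volume (E (2 * N) ∩ E (2 * N + 1)) = 0 ∧
      volume ((E (2 * N) ∪ E (2 * N + 1)) \ E N) = 0)
    (S : Finset ℕ) (hSrange : ∀ N ∈ S, 1 ≤ N ∧ N ≤ 2 ^ m - 1) :
    ((∀ a ∈ S, ∀ b ∈ S, (∃ i, b / 2 ^ i = a) ∨ (∃ i, a / 2 ^ i = b)) →
      ∀ N' ∈ S, (∀ N ∈ S, Nat.log 2 N ≤ Nat.log 2 N') →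
        volume ((⋂ N ∈ S, E N) \ E N') = 0 ∧
        volume (E N' \ ⋂ N ∈ S, E N) = 0 ∧
        0 < volume (⋂ N ∈ S, E N)) ∧
    (¬ (∀ a ∈ S, ∀ b ∈ S, (∃ i, b / 2 ^ i = a) ∨ (∃ i, a / 2 ^ i = b)) →
      volume (⋂ N ∈ S, E N) = 0) := by
  have hE : IsTreeSystem volume m E := htree
  constructor
  · intro hchain N' hN' hmax
    have hanc : ∀ N ∈ S, 1 ≤ N ∧ IsAncestor N N' := fun N hN => by
      refine ⟨(hSrange N hN).1, ?_⟩
      rcases hchain N hN N' hN' with h | h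
      · exact h
      · rw [IsAncestor.eq_of_log_le h (hSrange N' hN').1 (hmax N hN)]
        exact .refl N
    have hae := hE.biInter_ae_eq_of_isAncestor hN' (hSrange N' hN').2 hanc
    obtain ⟨hdiff, hdiff'⟩ := ae_eq_set.mp hae
    exact ⟨hdiff, hdiff', measure_congr hae ▸ hpos N' (hSrange N' hN').1 (hSrange N' hN').2⟩
  · intro hnot
    push Not at hnot
    obtain ⟨a, ha, b, hb, hab, hba⟩ := hnot
    refine measure_mono_null (Set.subset_inter (Set.biInter_subset_of_mem ha)
      (Set.biInter_subset_of_mem hb)) ?_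
    exact hE.measure_inter_eq_zero_of_not_isAncestor (hSrange a ha).1 (hSrange b hb).1
      (hSrange a ha).2 (hSrange b hb).2 (fun ⟨i, hi⟩ => hab i hi) (fun ⟨i, hi⟩ => hba i hi)

/-- Let `{E_N : 1 ≤ N ≤ 2^m - 1}` be measurable subsets of `Q = [0,1]^n` of positive measure
whose indicators form a tree system (vertex `N` has children `2N`, `2N+1`; `a` is an
ancestor-or-equal of `b` iff `b / 2^i = a` for some `i`, and the height of `N` is `log₂ N`).
Let `S` be a nonempty finite set of vertices. If all vertices of `S` lie on a common ray
(i.e. are pairwise comparable), then `⋂_{N ∈ S} E_N` agrees, up to a null set, with `E_{N'}`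
for the element `N'` of `S` of maximal height, and in particular has positive measure.
Otherwise `⋂_{N ∈ S} E_N` is a null set. -/
theorem treeSystem_iInter_of_chain (n m : ℕ) (hm : 1 ≤ m)
    (E : ℕ → Set (EuclideanSpace ℝ (Fin n)))
    (hmeas : ∀ N, 1 ≤ N → N ≤ 2 ^ m - 1 → MeasurableSet (E N))
    (hQ : ∀ N, 1 ≤ N → N ≤ 2 ^ m - 1 → E N ⊆ unitCube n)
    (hpos : ∀ N, 1 ≤ N → N ≤ 2 ^ m - 1 → 0 < volume (E N))
    (htree : ∀ N, 1 ≤ N → 2 * N + 1 ≤ 2 ^ m - 1 →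
      volume (E (2 * N) ∩ E (2 * N + 1)) = 0 ∧
      volume ((E (2 * N) ∪ E (2 * N + 1)) \ E N) = 0)
    (S : Finset ℕ) (hS : S.Nonempty) (hSrange : ∀ N ∈ S, 1 ≤ N ∧ N ≤ 2 ^ m - 1) :
    ((∀ a ∈ S, ∀ b ∈ S, (∃ i, b / 2 ^ i = a) ∨ (∃ i, a / 2 ^ i = b)) →
      ∀ N' ∈ S, (∀ N ∈ S, Nat.log 2 N ≤ Nat.log 2 N') →
        volume ((⋂ N ∈ S, E N) \ E N') = 0 ∧
        volume (E N' \ ⋂ N ∈ S, E N) = 0 ∧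
        0 < volume (⋂ N ∈ S, E N)) ∧
    (¬ (∀ a ∈ S, ∀ b ∈ S, (∃ i, b / 2 ^ i = a) ∨ (∃ i, a / 2 ^ i = b)) →
      volume (⋂ N ∈ S, E N) = 0) :=
  treeSystem_iInter_of_chain_general n m E hpos htree S hSrange
end

section
/- Let δ > 0, let E_1, …, E_M ⊆ ℝⁿ be measurable sets, let p̄_1, …, p̄_M ∈ ℝⁿ, and let g_1, …, g_M ∈ L¹(ℝⁿ) satisfy 0 ≤ g_N ≤ 1 and ‖g_N − χ_{E_N}‖_{L¹} ≤ δ for each N. Set f_N(x) = e^{2πi p̄_N·x} g_N(x). Let 1 ≤ m_1 < … < m_r ≤ M and 1 ≤ n_1 < … < n_s ≤ M be indices with positive integer multiplicities μ_1, …, μ_r and ν_1, …, ν_s, and write p = μ_1 + … + μ_r, q = ν_1 + … + ν_s, v = Σ_{i=1}^r μ_i p̄_{m_i} − Σ_{i=1}^s ν_i p̄_{n_i}, and E = E_{m_1} ∩ … ∩ E_{m_r} ∩ E_{n_1} ∩ … ∩ E_{n_s}. Then |∫_{ℝⁿ} f_{m_1}^{μ_1} ⋯ f_{m_r}^{μ_r}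 · conj(f_{n_1}^{ν_1} ⋯ f_{n_s}^{ν_s}) dx − ∫_{E} e^{2πi v·x} dx| ≤ (p+q) δ. -/
/-!
After pulling out the characters, the integrand is `e^{2πi v·x}` times the product of the `g_N`
raised to their multiplicities, and the integral over `E` is that of `e^{2πi v·x}` times the same
product of the indicators `χ_{E_N}` (a positive power of an indicator is itself). All factors lie in
`[0, 1]`, so telescoping gives `|∏ a_N - ∏ b_N| ≤ ∑ |a_N - b_N|` and `|a^k - b^k| ≤ k |a - b|`:
the two integrands differ pointwise by at most the multiplicity-weighted sum of `|g_N - χ_{E_N}|`,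
whose integral is at most `(p + q) δ`.
-/

open MeasureTheory
open scoped RealInnerProductSpace

section NormedRing

variable {ι R : Type*} [NormedCommRing R] [NormOneClass R]

theorem norm_prod_sub_prod_le_sum_norm_sub (s : Finset ι) {a b : ι → R}
    (ha : ∀ i ∈ s, ‖a i‖ ≤ 1) (hb : ∀ i ∈ s, ‖b i‖ ≤ 1) :
    ‖∏ i ∈ s, a i - ∏ i ∈ s, b i‖ ≤ ∑ i ∈ s, ‖a i - b i‖ := by
  classical
  induction s using Finset.induction_on with
  | empty => simp
  | @insert j s hj ih =>
    simp only [Finset.mem_insert, forall_eq_or_imp] at ha hb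
    rw [Finset.prod_insert hj, Finset.prod_insert hj, Finset.sum_insert hj]
    have hB : ‖∏ i ∈ s, b i‖ ≤ 1 :=
      (Finset.norm_prod_le _ _).trans (Finset.prod_le_one (fun _ _ => norm_nonneg _) hb.2)
    calc ‖a j * ∏ i ∈ s, a i - b j * ∏ i ∈ s, b i‖
        = ‖a j * (∏ i ∈ s, a i - ∏ i ∈ s, b i) + (a j - b j) * ∏ i ∈ s, b i‖ := by
          congr 1; ring
      _ ≤ ‖a j‖ * ‖∏ i ∈ s, a i - ∏ i ∈ s, b i‖ + ‖a j - b j‖ * ‖∏ i ∈ s, b i‖ :=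
          (norm_add_le _ _).trans (add_le_add (norm_mul_le _ _) (norm_mul_le _ _))
      _ ≤ 1 * ∑ i ∈ s, ‖a i - b i‖ + ‖a j - b j‖ * 1 := by
          gcongr
          exacts [ha.1, ih ha.2 hb.2]
      _ = ‖a j - b j‖ + ∑ i ∈ s, ‖a i - b i‖ := by ring

theorem norm_pow_sub_pow_le_mul_norm_sub {a b : R} (ha : ‖a‖ ≤ 1) (hb : ‖b‖ ≤ 1) (m : ℕ) :
    ‖a ^ m - b ^ m‖ ≤ m * ‖a - b‖ := by
  simpa using norm_prod_sub_prod_le_sum_norm_sub (Finset.range m) (a := fun _ => a)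
    (b := fun _ => b) (fun _ _ => ha) (fun _ _ => hb)

theorem norm_prod_pow_sub_indicator_iInter_le {α : Type*} [Fintype ι] (S : ι → Set α)
    {F : ι → α → R} (hF : ∀ i x, ‖F i x‖ ≤ 1) {κ : ι → ℕ} (hκ : ∀ i, κ i ≠ 0) (x : α) :
    ‖∏ i, F i x ^ κ i - (⋂ i, S i).indicator 1 x‖ ≤
      ∑ i, κ i * ‖F i x - (S i).indicator 1 x‖ := by
  have hχ1 : ∀ i, ‖(S i).indicator (1 : α → R) x‖ ≤ 1 := fun i => by
    by_cases hx : x ∈ S i <;> simp [hx]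
  have hχpow : ∀ i, (S i).indicator (1 : α → R) x ^ κ i = (S i).indicator 1 x := fun i => by
    by_cases hx : x ∈ S i <;> simp [hx, hκ i]
  have hiInter : (⋂ i, S i).indicator (1 : α → R) x = ∏ i, (S i).indicator 1 x ^ κ i := by
    simp [hχpow, prod_indicator_apply]
  rw [hiInter]
  refine (norm_prod_sub_prod_le_sum_norm_sub _ (fun i _ => ?_) (fun i _ => ?_)).trans ?_
  · exact (norm_pow_le _ _).trans (pow_le_one₀ (norm_nonneg _) (hF i x))
  · exact (norm_pow_le _ _).trans (pow_le_one₀ (norm_nonneg _) (hχ1 i))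
  · exact Finset.sum_le_sum fun i _ => norm_pow_sub_pow_le_mul_norm_sub (hF i x) (hχ1 i) _

end NormedRing

section Integral

variable {α E : Type*} [MeasurableSpace α] {μ : Measure α} [NormedAddCommGroup E]

theorem norm_integral_sub_integral_le_of_integrable_sub [NormedSpace ℝ E] {f g : α → E}
    (hfg : Integrable (f - g) μ) :
    ‖∫ x, f x ∂μ - ∫ x, g x ∂μ‖ ≤ ∫ x, ‖f x - g x‖ ∂μ := by
  by_cases hf : Integrable f μ
  · have hg : Integrable g μ := by simpa using hf.sub hfg
    rw [← integral_sub hf hg]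
    exact norm_integral_le_integral_norm _
  · -- then `g` is not integrable either, and both integrals are the junk value `0`
    have hg : ¬Integrable g μ := fun hg => hf (by simpa using hfg.add hg)
    rw [integral_undef hf, integral_undef hg, sub_self, norm_zero]
    exact integral_nonneg fun _ => norm_nonneg _

theorem integral_norm_le_of_eLpNorm_one_le {f : α → E} (hf : AEStronglyMeasurable f μ) {δ : ℝ}
    (hδ : 0 ≤ δ) (h : eLpNorm f 1 μ ≤ ENNReal.ofReal δ) : ∫ x, ‖f x‖ ∂μ ≤ δ := by
  rw [integral_norm_eq_lintegral_enorm hf, ← eLpNorm_one_eq_lintegral_enorm]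
  exact ENNReal.toReal_le_of_le_ofReal hδ h

end Integral

theorem norm_integral_mul_prod_pow_sub_setIntegral_iInter_le {α ι : Type*} [MeasurableSpace α]
    {μ : Measure α} [Fintype ι] {S : ι → Set α} (hS : ∀ i, MeasurableSet (S i))
    {F : ι → α → ℝ} (hF : ∀ i, AEStronglyMeasurable (F i) μ) (hF1 : ∀ i x, ‖F i x‖ ≤ 1)
    {κ : ι → ℕ} (hκ : ∀ i, κ i ≠ 0) {e : α → ℂ} (he : AEStronglyMeasurable e μ)
    (he1 : ∀ x, ‖e x‖ ≤ 1) {δ : ℝ} (hδ : 0 ≤ δ)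
    (herr : ∀ i, eLpNorm (fun x => F i x - (S i).indicator 1 x) 1 μ ≤ ENNReal.ofReal δ) :
    ‖∫ x, e x * (∏ i, F i x ^ κ i : ℝ) ∂μ - ∫ x in ⋂ i, S i, e x ∂μ‖ ≤
      (∑ i, (κ i : ℝ)) * δ := by
  set χ : ι → α → ℝ := fun i => (S i).indicator 1
  set H : α → ℝ := (⋂ i, S i).indicator 1
  set D : α → ℝ := fun x => ∑ i, κ i * ‖F i x - χ i x‖
  have hχ : ∀ i, AEStronglyMeasurable (χ i) μ := fun i =>
    (stronglyMeasurable_const.indicator (hS i)).aestronglyMeasurable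
  have hFχ : ∀ i, Integrable (fun x => F i x - χ i x) μ := fun i =>
    memLp_one_iff_integrable.1 ⟨(hF i).sub (hχ i), (herr i).trans_lt ENNReal.ofReal_lt_top⟩
  have hD : Integrable D μ := integrable_finsetSum _ fun i _ => ((hFχ i).norm.const_mul _)
  have hpoint : ∀ x, ‖e x * (∏ i, F i x ^ κ i : ℝ) - e x * (H x : ℂ)‖ ≤ D x := fun x => by
    rw [← mul_sub, norm_mul, ← Complex.ofReal_sub, Complex.norm_real]
    exact (mul_le_of_le_one_left (norm_nonneg _) (he1 x)).trans
      (norm_prod_pow_sub_indicator_iInter_le S hF1 hκ x)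
  have hsetIntegral : ∫ x in ⋂ i, S i, e x ∂μ = ∫ x, e x * (H x : ℂ) ∂μ := by
    rw [← integral_indicator (MeasurableSet.iInter hS)]
    congr 1 with x
    by_cases hx : x ∈ ⋂ i, S i <;> simp [H, hx]
  have hmeas :
      AEStronglyMeasurable (fun x => e x * (∏ i, F i x ^ κ i : ℝ) - e x * (H x : ℂ)) μ := by
    have hG : AEStronglyMeasurable (fun x => ∏ i, F i x ^ κ i) μ :=
      Finset.aestronglyMeasurable_fun_prod _ fun i _ => (hF i).pow _
    have hH : AEStronglyMeasurable H μ :=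
      (stronglyMeasurable_const.indicator (MeasurableSet.iInter hS)).aestronglyMeasurable
    fun_prop
  rw [hsetIntegral]
  calc _ ≤ ∫ x, ‖e x * (∏ i, F i x ^ κ i : ℝ) - e x * (H x : ℂ)‖ ∂μ :=
        norm_integral_sub_integral_le_of_integrable_sub (hD.mono' hmeas (.of_forall hpoint))
    _ ≤ ∫ x, D x ∂μ :=
        integral_mono_of_nonneg (.of_forall fun _ => norm_nonneg _) hD (.of_forall hpoint)
    _ = ∑ i, κ i * ∫ x, ‖F i x - χ i x‖ ∂μ := by
        rw [integral_finsetSum _ fun i _ => (hFχ i).norm.const_mul _]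
        simp_rw [integral_const_mul]
    _ ≤ ∑ i, κ i * δ := by
        gcongr with i
        exact integral_norm_le_of_eLpNorm_one_le (hFχ i).aestronglyMeasurable hδ (herr i)
    _ = (∑ i, (κ i : ℝ)) * δ := Finset.sum_mul .. |>.symm

section Fourier

open Complex
open scoped Real

variable {V : Type*} [NormedAddCommGroup V] [InnerProductSpace ℝ V]

theorem prod_exp_inner_mul_pow {ι : Type*} [Fintype ι] (x : V) (p : ι → V) (a : ι → ℝ)
    (k : ι → ℕ) :
    ∏ i, (exp (2 * π * I * (⟪x, p i⟫ : ℝ)) * (a i : ℂ)) ^ k i =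
      exp (2 * π * I * (⟪x, ∑ i, (k i : ℝ) • p i⟫ : ℝ)) * (∏ i, a i ^ k i : ℝ) := by
  simp only [mul_pow, Finset.prod_mul_distrib, inner_sum, real_inner_smul_right, ofReal_sum,
    Finset.mul_sum, exp_sum, ofReal_prod, ofReal_pow, ← exp_nat_mul, ofReal_mul, ofReal_natCast]
  exact congrArg (· * _) (Finset.prod_congr rfl fun i _ => by rw [mul_left_comm])

theorem prod_exp_inner_mul_pow_mul_conj {ι ι' : Type*} [Fintype ι] [Fintype ι'] (x : V)
    (p : ι → V) (q : ι' → V) (a : ι → ℝ) (b : ι' → ℝ) (k : ι → ℕ) (l : ι' → ℕ) :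
    (∏ i, (exp (2 * π * I * (⟪x, p i⟫ : ℝ)) * (a i : ℂ)) ^ k i) *
        starRingEnd ℂ (∏ j, (exp (2 * π * I * (⟪x, q j⟫ : ℝ)) * (b j : ℂ)) ^ l j) =
      exp (2 * π * I * (⟪x, (∑ i, (k i : ℝ) • p i) - ∑ j, (l j : ℝ) • q j⟫ : ℝ)) *
        ((∏ i, a i ^ k i) * ∏ j, b j ^ l j : ℝ) := by
  rw [prod_exp_inner_mul_pow, prod_exp_inner_mul_pow, map_mul, ← exp_conj, conj_ofReal,
    inner_sub_right, ofReal_sub, mul_sub, sub_eq_add_neg, exp_add]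
  simp only [map_mul, conj_ofReal, conj_I, map_ofNat, ofReal_mul]
  ring_nf

theorem norm_exp_two_pi_I_mul (t : ℝ) : ‖exp (2 * π * I * t)‖ = 1 := by
  simp [norm_exp]

end Fourier

theorem integral_product_approx_general (n M : ℕ) (δ : ℝ) (hδ : 0 < δ)
    (E : Fin M → Set (EuclideanSpace ℝ (Fin n)))
    (hEmeas : ∀ N, MeasurableSet (E N))
    (pbar : Fin M → EuclideanSpace ℝ (Fin n))
    (g : Fin M → EuclideanSpace ℝ (Fin n) → ℝ)
    (hgint : ∀ N, Integrable (g N))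
    (hg01 : ∀ N x, 0 ≤ g N x ∧ g N x ≤ 1)
    (hgerr : ∀ N, eLpNorm (fun x => g N x - (E N).indicator 1 x) 1 volume ≤ ENNReal.ofReal δ)
    (r s : ℕ) (mi : Fin r → Fin M) (ni : Fin s → Fin M)
    (μ : Fin r → ℕ) (ν : Fin s → ℕ) (hμ : ∀ i, 1 ≤ μ i) (hν : ∀ i, 1 ≤ ν i) :
    ‖
      ((∫ x, (∏ i, (Complex.exp (2 * Real.pi * Complex.I * (⟪x, pbar (mi i)⟫ : ℝ)) *
              (g (mi i) x : ℂ)) ^ (μ i)) *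
          (starRingEnd ℂ) (∏ i, (Complex.exp (2 * Real.pi * Complex.I *
              (⟪x, pbar (ni i)⟫ : ℝ)) * (g (ni i) x : ℂ)) ^ (ν i))) -
        ∫ x in (⋂ i, E (mi i)) ∩ ⋂ i, E (ni i),
          Complex.exp (2 * Real.pi * Complex.I *
            ((⟪x, (∑ i, (μ i : ℝ) • pbar (mi i)) - ∑ i, (ν i : ℝ) • pbar (ni i)⟫ : ℝ))))‖ ≤
      ((∑ i, μ i : ℕ) + (∑ i, ν i : ℕ)) * δ := by
  set N : Fin r ⊕ Fin s → Fin M := Sum.elim mi ni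
  set κ : Fin r ⊕ Fin s → ℕ := Sum.elim μ ν
  have hκ : ∀ i, κ i ≠ 0 := Sum.forall.2
    ⟨fun i => Nat.one_le_iff_ne_zero.1 (hμ i), fun i => Nat.one_le_iff_ne_zero.1 (hν i)⟩
  have hset : (⋂ i, E (mi i)) ∩ ⋂ i, E (ni i) = ⋂ i, E (N i) := by rw [Set.iInter_sum]; rfl
  have hmult : ((∑ i, μ i : ℕ) + (∑ i, ν i : ℕ) : ℝ) = ∑ i, (κ i : ℝ) := by
    simp [κ, Fintype.sum_sum_type]
  have hprod : ∀ x, (∏ i, g (mi i) x ^ μ i) * ∏ j, g (ni j) x ^ ν j = ∏ i, g (N i) x ^ κ i :=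
    fun x => (Fintype.prod_sum_type fun i => g (N i) x ^ κ i).symm
  simp only [prod_exp_inner_mul_pow_mul_conj, hprod, hset, hmult]
  exact norm_integral_mul_prod_pow_sub_setIntegral_iInter_le (fun i => hEmeas (N i))
    (fun i => (hgint (N i)).aestronglyMeasurable)
    (fun i x => abs_le.2 ⟨by linarith [hg01 (N i) x], (hg01 (N i) x).2⟩) hκ
    (by fun_prop) (fun x => (norm_exp_two_pi_I_mul _).le) hδ.le (fun i => hgerr (N i))

/-- If `0 ≤ g_N ≤ 1`, `‖g_N - χ_{E_N}‖₁ ≤ δ`, and `f_N(x) = e^{2πi p̄_N·x} g_N(x)`, then the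
integral of `f_{m_1}^{μ_1} ⋯ f_{m_r}^{μ_r} conj(f_{n_1}^{ν_1} ⋯ f_{n_s}^{ν_s})` differs from
`∫_E e^{2πi v·x} dx` by at most `(p+q) δ`, where `p = Σ μ_i`, `q = Σ ν_i`,
`v = Σ μ_i p̄_{m_i} - Σ ν_i p̄_{n_i}` and `E = E_{m_1} ∩ ⋯ ∩ E_{m_r} ∩ E_{n_1} ∩ ⋯ ∩ E_{n_s}`. -/
theorem integral_product_approx (n M : ℕ) (δ : ℝ) (hδ : 0 < δ)
    (E : Fin M → Set (EuclideanSpace ℝ (Fin n)))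
    (hEmeas : ∀ N, MeasurableSet (E N))
    (pbar : Fin M → EuclideanSpace ℝ (Fin n))
    (g : Fin M → EuclideanSpace ℝ (Fin n) → ℝ)
    (hgint : ∀ N, Integrable (g N))
    (hg01 : ∀ N x, 0 ≤ g N x ∧ g N x ≤ 1)
    (hgerr : ∀ N, eLpNorm (fun x => g N x - (E N).indicator 1 x) 1 volume ≤ ENNReal.ofReal δ)
    (r s : ℕ) (mi : Fin r → Fin M) (ni : Fin s → Fin M)
    (hmi : StrictMono mi) (hni : StrictMono ni)
    (μ : Fin r → ℕ) (ν : Fin s → ℕ) (hμ : ∀ i, 1 ≤ μ i) (hν : ∀ i, 1 ≤ ν i) :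
    ‖
      ((∫ x, (∏ i, (Complex.exp (2 * Real.pi * Complex.I * (⟪x, pbar (mi i)⟫ : ℝ)) *
              (g (mi i) x : ℂ)) ^ (μ i)) *
          (starRingEnd ℂ) (∏ i, (Complex.exp (2 * Real.pi * Complex.I *
              (⟪x, pbar (ni i)⟫ : ℝ)) * (g (ni i) x : ℂ)) ^ (ν i))) -
        ∫ x in (⋂ i, E (mi i)) ∩ ⋂ i, E (ni i),
          Complex.exp (2 * Real.pi * Complex.I *
            ((⟪x, (∑ i, (μ i : ℝ) • pbar (mi i)) - ∑ i, (ν i : ℝ) • pbar (ni i)⟫ : ℝ))))‖ ≤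
      ((∑ i, μ i : ℕ) + (∑ i, ν i : ℕ)) * δ :=
  integral_product_approx_general n M δ hδ E hEmeas pbar g hgint hg01 hgerr r s mi ni μ ν hμ hν
end
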